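/- arXiv:1904.02778 — 4 statements merged into one kernel-verified Lean document; each statement's English description precedes it below -/
import Mathlib

section
/- Under the hypotheses of the previous bound, if additionally the values E_0,...,E_{N-1} are pairwise distinct and there exists an index i ≥ M (with respect to the increasing ordering of E) such that the corresponding p-value is strictly positive, then the inequality is strict: ∑_{i=0}^{N-1} p_i E_i > A · (sum of the M smallest E_i). -/
/-!
Put `q = p ∘ σ`, `e = E ∘ σ` and let `c` be the extremal profile equal to `A` on the `M` lowest
indices and `0` elsewhere. Since `∑ q = ∑ c`, for the threshold `t = e M` one has
`∑ q e - ∑ c e = ∑ (q - c)(e - t)`, and every term is nonnegative: below `M` both factors are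
`≤ 0`, from `M` on both are `≥ 0`. Mass of `q` beyond `M` forces some `j < M` with `q j < A`,
and strict monotonicity of `e` (the `E i` are distinct) makes the `j`-th term strictly positive.
-/

open Finset

section Bathtub

variable {ι : Type*} [Fintype ι]

theorem Finset.exists_mem_lt_of_sum_eq_card_mul {s : Finset ι} {q : ι → ℝ} {A : ℝ}
    (hq : ∀ i, 0 ≤ q i) (hsum : ∑ i, q i = #s * A) {i₀ : ι} (hi₀ : i₀ ∉ s)
    (hpos : 0 < q i₀) : ∃ j ∈ s, q j < A := by
  classical
  by_contra! hge
  have hs : #s • A ≤ ∑ i ∈ s, q i := card_nsmul_le_sum s q A hge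
  have hsc : q i₀ ≤ ∑ i ∈ sᶜ, q i :=
    single_le_sum (fun i _ => hq i) (mem_compl.mpr hi₀)
  rw [nsmul_eq_mul] at hs
  rw [← sum_add_sum_compl s] at hsum
  linarith

theorem sum_mul_sub_sum_mul_eq_sum_sub_mul_sub {q c : ι → ℝ} (hsum : ∑ i, q i = ∑ i, c i)
    (e : ι → ℝ) (t : ℝ) :
    ∑ i, q i * e i - ∑ i, c i * e i = ∑ i, (q i - c i) * (e i - t) := by
  simp only [sub_mul, mul_sub, sum_sub_distrib, ← sum_mul, hsum]
  ring

theorem mul_sum_lt_sum_mul_of_sum_eq_card_mul {s : Finset ι} {q e : ι → ℝ} {A t : ℝ}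
    (hs : ∀ i ∈ s, e i ≤ t) (hsc : ∀ i ∉ s, t ≤ e i) (hq : ∀ i, 0 ≤ q i ∧ q i ≤ A)
    (hsum : ∑ i, q i = #s * A) {j : ι} (hj : j ∈ s) (hqj : q j < A) (hej : e j < t) :
    A * ∑ i ∈ s, e i < ∑ i, q i * e i := by
  classical
  set c : ι → ℝ := fun i => if i ∈ s then A else 0
  have hc : ∑ i, c i = #s * A := by simp [c, sum_ite_mem]
  have hce : ∑ i, c i * e i = A * ∑ i ∈ s, e i := by
    simp [c, ite_mul, sum_ite_mem, mul_sum]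
  have hterm : ∀ i, 0 ≤ (q i - c i) * (e i - t) := fun i => by
    by_cases hi : i ∈ s
    · simp only [c, hi, if_true]
      exact mul_nonneg_of_nonpos_of_nonpos (by linarith [hq i]) (by linarith [hs i hi])
    · simp only [c, hi, if_false, sub_zero]
      exact mul_nonneg (hq i).1 (by linarith [hsc i hi])
  have hpos : 0 < ∑ i, (q i - c i) * (e i - t) := by
    refine sum_pos' (fun i _ => hterm i) ⟨j, mem_univ j, ?_⟩
    simp only [c, hj, if_true]
    exact mul_pos_of_neg_of_neg (by linarith) (by linarith)
  rw [← sum_mul_sub_sum_mul_eq_sum_sub_mul_sub (hsum.trans hc.symm) e t, hce] at hpos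
  linarith

end Bathtub

theorem stmt_1_general (N M : ℕ) (p E : Fin N → ℝ) (A : ℝ)
    (hp : ∀ i, 0 ≤ p i ∧ p i ≤ A) (hsum : ∑ i, p i = M * A)
    (hE : Function.Injective E)
    (σ : Equiv.Perm (Fin N)) (hσ : Monotone (fun i => E (σ i)))
    (hpos : ∃ i : Fin N, M ≤ (i : ℕ) ∧ 0 < p (σ i)) :
    A * ∑ i ∈ Finset.univ.filter (fun i : Fin N => (i : ℕ) < M), E (σ i)
      < ∑ i, p i * E i := by
  obtain ⟨i₀, hi₀M, hi₀pos⟩ := hpos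
  set m : Fin N := ⟨M, hi₀M.trans_lt i₀.isLt⟩
  have hlower : univ.filter (fun i : Fin N => (i : ℕ) < M) = Iio m := by
    ext i; simp [m, Fin.lt_def]
  have hstrict : StrictMono (fun i => E (σ i)) :=
    hσ.strictMono_of_injective (hE.comp σ.injective)
  have hsum' : ∑ i, p (σ i) = #(Iio m) * A := by rw [Equiv.sum_comp, Fin.card_Iio, hsum]
  obtain ⟨j, hj, hpj⟩ := exists_mem_lt_of_sum_eq_card_mul (fun i => (hp (σ i)).1) hsum'
    (i₀ := i₀) (by simpa [m, Fin.le_def] using hi₀M) hi₀pos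
  rw [hlower, ← Equiv.sum_comp σ (fun i => p i * E i)]
  exact mul_sum_lt_sum_mul_of_sum_eq_card_mul (fun i hi => hσ (mem_Iio.mp hi).le)
    (fun i hi => hσ (not_lt.mp (mem_Iio.not.mp hi))) (fun i => hp (σ i)) hsum' hj hpj
    (hstrict (mem_Iio.mp hj))

/-- Under the hypotheses of the bound of Statement 0, if the `E i` are
pairwise distinct and some `p (σ i) > 0` for an index `i ≥ M` (in the increasing
ordering of `E` given by `σ`), then the inequality is strict. -/
theorem stmt_1 (N M : ℕ) (hMN : M ≤ N) (p E : Fin N → ℝ) (A : ℝ) (hA : 0 < A)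
    (hp : ∀ i, 0 ≤ p i ∧ p i ≤ A) (hsum : ∑ i, p i = M * A)
    (hE : Function.Injective E)
    (σ : Equiv.Perm (Fin N)) (hσ : Monotone (fun i => E (σ i)))
    (hpos : ∃ i : Fin N, M ≤ (i : ℕ) ∧ 0 < p (σ i)) :
    A * ∑ i ∈ Finset.univ.filter (fun i : Fin N => (i : ℕ) < M), E (σ i)
      < ∑ i, p i * E i :=
  stmt_1_general N M p E A hp hsum hE σ hσ hpos
end

section
/- In the setting of the previous statement, if additionally the spectrum of H is non-degenerate (all eigenvalues distinct), then equality ∑_{i=0}^{M-1} ⟨a_i, H a_i⟩ = ∑_{i=0}^{M-1} E_i holds if and only if every a_i lies in the span of the eigenvectors corresponding to the M smallest eigenvalues E_0,...,E_{M-1}. -/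
/-!
Expanding in the eigenbasis, `∑ᵢ ⟪aᵢ, H aᵢ⟫ = ∑ⱼ Eⱼ pⱼ` with weights `pⱼ = ∑ᵢ ‖⟪eⱼ, aᵢ⟫‖²`,
which lie in `[0, 1]` (Bessel) and sum to `M` (Parseval). For a threshold `t` with
`E_{M-1} ≤ t < E_M`, the excess `∑ⱼ Eⱼ pⱼ - ∑_{j<M} Eⱼ` equals
`∑_{k≥M} (E_k - t) p_k + ∑_{j<M} (t - E_j) (1 - p_j)`, a sum of nonnegative terms. So equality
forces `p_k = 0` for `k ≥ M`, i.e. every `aᵢ` is orthogonal to the `e_k` with `k ≥ M`.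
-/

open scoped InnerProductSpace

section Threshold

open Finset

variable {ι : Type*} [Fintype ι]

theorem exists_threshold_of_forall_lt (E : ι → ℝ) (s : Finset ι)
    (hsep : ∀ j ∈ s, ∀ k ∉ s, E j < E k) : ∃ t, (∀ j ∈ s, E j ≤ t) ∧ ∀ k ∉ s, t < E k := by
  rcases s.eq_empty_or_nonempty with rfl | hs
  · obtain ⟨b, hb⟩ := (Set.finite_range E).bddBelow
    exact ⟨b - 1, by simp, fun k _ => by linarith [hb (Set.mem_range_self k)]⟩
  · exact ⟨s.sup' hs E, fun j hj => le_sup' E hj,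
      fun k hk => (sup'_lt_iff hs).2 fun j hj => hsep j hj k hk⟩

theorem sum_mul_eq_sum_iff_forall_notMem_eq_zero [DecidableEq ι] (E p : ι → ℝ) (s : Finset ι)
    (hsep : ∀ j ∈ s, ∀ k ∉ s, E j < E k) (hp0 : ∀ j, 0 ≤ p j) (hp1 : ∀ j, p j ≤ 1)
    (hmass : ∑ j, p j = #s) :
    ∑ j, E j * p j = ∑ j ∈ s, E j ↔ ∀ k ∉ s, p k = 0 := by
  have hsplit : ∀ t, ∑ j, E j * p j - ∑ j ∈ s, E j =
      ∑ k ∈ sᶜ, (E k - t) * p k + ∑ j ∈ s, (t - E j) * (1 - p j) := by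
    intro t
    rw [← sum_add_sum_compl s p] at hmass
    rw [← sum_add_sum_compl s fun j => E j * p j]
    simp only [sub_mul, mul_sub, mul_one, sum_sub_distrib, ← mul_sum, sum_const, nsmul_eq_mul]
    linear_combination t * hmass
  constructor
  · intro heq
    obtain ⟨t, hs, hsc⟩ := exists_threshold_of_forall_lt E s hsep
    have hnonneg_sc : ∀ k ∈ sᶜ, 0 ≤ (E k - t) * p k := fun k hk =>
      mul_nonneg (sub_nonneg.2 (hsc k (mem_compl.1 hk)).le) (hp0 k)
    have hnonneg_s : ∀ j ∈ s, 0 ≤ (t - E j) * (1 - p j) := fun j hj =>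
      mul_nonneg (sub_nonneg.2 (hs j hj)) (sub_nonneg.2 (hp1 j))
    have hzero : ∑ k ∈ sᶜ, (E k - t) * p k = 0 := by
      linarith [hsplit t, sum_nonneg hnonneg_sc, sum_nonneg hnonneg_s]
    intro k hk
    have := (sum_eq_zero_iff_of_nonneg hnonneg_sc).1 hzero k (mem_compl.2 hk)
    exact (mul_eq_zero.1 this).resolve_left (sub_pos.2 (hsc k hk)).ne'
  · intro hsc
    have hs : ∀ j ∈ s, p j = 1 := by
      have hmass_s : ∑ j ∈ s, (1 - p j) = 0 := by
        rw [← sum_add_sum_compl s p, sum_eq_zero fun k hk => hsc k (mem_compl.1 hk),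
          add_zero] at hmass
        rw [sum_sub_distrib, sum_const, nsmul_one, hmass, sub_self]
      intro j hj
      linarith [(sum_eq_zero_iff_of_nonneg fun j _ => sub_nonneg.2 (hp1 j)).1 hmass_s j hj]
    have hsc' : ∑ k ∈ sᶜ, (E k - 0) * p k = 0 :=
      sum_eq_zero fun k hk => by rw [hsc k (mem_compl.1 hk), mul_zero]
    have hs' : ∑ j ∈ s, (0 - E j) * (1 - p j) = 0 :=
      sum_eq_zero fun j hj => by rw [hs j hj, sub_self, mul_zero]
    linarith [hsplit 0]

end Threshold

namespace OrthonormalBasis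

variable {ι 𝕜 V : Type*} [Fintype ι] [RCLike 𝕜] [NormedAddCommGroup V] [InnerProductSpace 𝕜 V]
  (e : OrthonormalBasis ι 𝕜 V) {H : V →ₗ[𝕜] V} {E : ι → ℝ}

theorem inner_map_of_eigen (heig : ∀ i, H (e i) = (E i : 𝕜) • e i)
    (j : ι) (x : V) : ⟪e j, H x⟫_𝕜 = E j * ⟪e j, x⟫_𝕜 := by
  classical
  conv_lhs => rw [← e.sum_repr' x]
  simp [map_sum, heig, inner_sum, inner_smul_right, e.inner_eq_ite, mul_comm]

theorem re_inner_map_self_of_eigen (heig : ∀ i, H (e i) = (E i : 𝕜) • e i)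
    (x : V) : RCLike.re ⟪x, H x⟫_𝕜 = ∑ j, E j * ‖⟪e j, x⟫_𝕜‖ ^ 2 := by
  rw [← e.sum_inner_mul_inner x (H x), map_sum]
  refine Finset.sum_congr rfl fun j _ => ?_
  rw [e.inner_map_of_eigen heig, ← inner_conj_symm, mul_left_comm, RCLike.conj_mul]
  norm_cast

theorem mem_span_image_iff {S : Set ι} {x : V} :
    x ∈ Submodule.span 𝕜 (e '' S) ↔ ∀ j ∉ S, ⟪e j, x⟫_𝕜 = 0 := by
  rw [← e.coe_toBasis, Module.Basis.mem_span_image]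
  simp only [Set.subset_def, Finset.mem_coe, Finsupp.mem_support_iff,
    OrthonormalBasis.coe_toBasis_repr_apply, OrthonormalBasis.repr_apply_apply]
  exact forall_congr' fun j => not_imp_comm

end OrthonormalBasis

/-- in the setting of Statement 3, if the spectrum is non-degenerate
(`E` strictly increasing), then `∑_{i<M} ⟨a i, H (a i)⟩ = ∑_{i<M} E i` holds iff
every `a i` lies in the span of the eigenvectors of the `M` smallest eigenvalues. -/
theorem stmt_4 {V : Type*} [NormedAddCommGroup V] [InnerProductSpace ℂ V]
    (N M : ℕ) (hMN : M ≤ N)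
    (e : OrthonormalBasis (Fin N) ℂ V) (H : V →ₗ[ℂ] V) (E : Fin N → ℝ)
    (hE : StrictMono E) (heig : ∀ i, H (e i) = (E i : ℂ) • e i)
    (a : Fin M → V) (ha : Orthonormal ℂ a) :
    (∑ i : Fin M, (⟪a i, H (a i)⟫_ℂ).re = ∑ i : Fin M, E (Fin.castLE hMN i)) ↔
      ∀ i : Fin M, a i ∈ Submodule.span ℂ
        (Set.range (fun j : Fin M => e (Fin.castLE hMN j))) := by
  classical
  set s : Finset (Fin N) := Finset.univ.map (Fin.castLEEmb hMN)
  have hmem (j : Fin N) : j ∈ s ↔ (j : ℕ) < M := by rw [← Finset.mem_coe]; simp [s]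
  have hspan : Set.range (fun j : Fin M => e (Fin.castLE hMN j)) = e '' s := by
    rw [Finset.coe_map, Finset.coe_univ, Set.image_univ, ← Set.range_comp]; rfl
  have hsep : ∀ j ∈ s, ∀ k ∉ s, E j < E k := fun j hj k hk =>
    hE (Fin.lt_def.2 (((hmem j).1 hj).trans_le (not_lt.1 ((hmem k).not.1 hk))))
  let p j := ∑ i, ‖⟪e j, a i⟫_ℂ‖ ^ 2
  have hp1 (j : Fin N) : p j ≤ 1 := by
    simpa [p, norm_inner_symm, e.orthonormal.1 j] using
      ha.sum_inner_products_le (e j) (s := .univ)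
  have hmass : ∑ j, p j = s.card := by
    rw [Finset.sum_comm]; simp [s, e.sum_sq_norm_inner_right, ha.1]
  have hLHS : ∑ i, (⟪a i, H (a i)⟫_ℂ).re = ∑ j, E j * p j := by
    simp only [p, Finset.mul_sum]
    rw [Finset.sum_comm]
    exact Finset.sum_congr rfl fun i _ => e.re_inner_map_self_of_eigen heig (a i)
  have hRHS : ∑ i, E (Fin.castLE hMN i) = ∑ j ∈ s, E j :=
    (Finset.sum_map Finset.univ (Fin.castLEEmb hMN) E).symm
  rw [hLHS, hRHS, sum_mul_eq_sum_iff_forall_notMem_eq_zero E p s hsep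
    (fun _ => by positivity) hp1 hmass, hspan]
  simp [p, e.mem_span_image_iff, Finset.sum_eq_zero_iff_of_nonneg, forall_comm (α := Fin M)]
end

section
/- For a Gibbs distribution over energies E_0 ≤ ... ≤ E_{N-1} where the minimum energy E_0 has multiplicity d_g, the entropy S(β) is strictly decreasing on (0,∞) (assuming not all E_i are equal), with S(0) = ln N and lim_{β→∞} S(β) = ln d_g. Consequently, for every value ℰ with ln d_g < ℰ < ln N there is a unique β > 0 with S(β) = ℰ. -/
/-- Partition function of the classical Gibbs distribution. -/
noncomputable def gibbsZ (N : ℕ) (E : Fin N → ℝ) (β : ℝ) : ℝ :=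
  ∑ i, Real.exp (-β * E i)

/-- Gibbs probability weight `λ_i(β)`. -/
noncomputable def gibbsWeight (N : ℕ) (E : Fin N → ℝ) (β : ℝ) (i : Fin N) : ℝ :=
  Real.exp (-β * E i) / gibbsZ N E β

/-- Shannon entropy `S(β)` of the classical Gibbs distribution. -/
noncomputable def gibbsEntropy (N : ℕ) (E : Fin N → ℝ) (β : ℝ) : ℝ :=
  -∑ i, gibbsWeight N E β i * Real.log (gibbsWeight N E β i)

/-- Multiplicity `d_g` of the minimum energy. -/
noncomputable def groundDeg (N : ℕ) (E : Fin N → ℝ) : ℕ :=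
  (Finset.univ.filter fun i : Fin N => ∀ j, E i ≤ E j).card

/-!
Writing `U(β) = ∑ λᵢ Eᵢ` for the mean energy, `-∑ λᵢ(β) ln λᵢ(γ) = γ U(β) + ln Z(γ)`, so
`S(β) = β U(β) + ln Z(β)`. Gibbs' inequality, applied to `λ(β) ≠ λ(γ)` in both directions, gives
`S(β) < γ U(β) + ln Z(γ)` and `S(γ) < β U(γ) + ln Z(β)`; adding them shows that `U` is strictly
decreasing, and then `S(γ) < β U(γ) + ln Z(β) ≤ β U(β) + ln Z(β) = S(β)` for `0 ≤ β < γ`.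
As `β → ∞` the weights concentrate uniformly on the ground states, whose entropy is `ln d_g`;
the remaining claim is the intermediate value theorem.
-/

open Real Finset Filter Topology

/-- **Gibbs' inequality**, strict form. -/
theorem sum_mul_log_lt_sum_mul_log {ι : Type*} [Fintype ι] {p q : ι → ℝ}
    (hp : ∀ i, 0 < p i) (hq : ∀ i, 0 < q i) (hsum : ∑ i, q i ≤ ∑ i, p i) (hne : p ≠ q) :
    ∑ i, p i * log (q i) < ∑ i, p i * log (p i) := by
  have hterm : ∀ i, p i * log (q i) - p i * log (p i) = p i * log (q i / p i) := fun i => by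
    rw [log_div (hq i).ne' (hp i).ne', mul_sub]
  have hle : ∀ i, p i * log (q i / p i) ≤ q i - p i := fun i => by
    have := mul_le_mul_of_nonneg_left (log_le_sub_one_of_pos (div_pos (hq i) (hp i))) (hp i).le
    rwa [mul_sub, mul_div_cancel₀ _ (hp i).ne', mul_one] at this
  obtain ⟨j, hj⟩ := Function.ne_iff.mp hne
  have hlt : p j * log (q j / p j) < q j - p j := by
    have hj' : q j / p j ≠ 1 := fun h => hj ((div_eq_one_iff_eq (hp j).ne').mp h).symm
    have := mul_lt_mul_of_pos_left (log_lt_sub_one_of_pos (div_pos (hq j) (hp j)) hj') (hp j)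
    rwa [mul_sub, mul_div_cancel₀ _ (hp j).ne', mul_one] at this
  have : ∑ i, p i * log (q i / p i) < ∑ i, (q i - p i) :=
    Finset.sum_lt_sum (fun i _ => hle i) ⟨j, mem_univ j, hlt⟩
  simp only [← hterm, Finset.sum_sub_distrib] at this
  linarith

theorem sum_negMulLog_uniformOn {ι : Type*} [Fintype ι] [DecidableEq ι] (s : Finset ι) :
    ∑ i, negMulLog (if i ∈ s then (#s : ℝ)⁻¹ else 0) = log #s := by
  have hite : ∀ i, negMulLog (if i ∈ s then (#s : ℝ)⁻¹ else 0)
      = if i ∈ s then negMulLog (#s : ℝ)⁻¹ else 0 := fun i => by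
    split_ifs <;> simp
  rw [Finset.sum_congr rfl fun i _ => hite i, Finset.sum_ite_mem, univ_inter, sum_const,
    nsmul_eq_mul, negMulLog, log_inv]
  rcases eq_or_ne (#s : ℝ) 0 with h | h
  · simp [h]
  · field_simp

theorem tendsto_exp_neg_mul_atTop {a : ℝ} (ha : 0 ≤ a) :
    Tendsto (fun β => exp (-β * a)) atTop (𝓝 (if a = 0 then 1 else 0)) := by
  split_ifs with h
  · simp [h]
  · have : Tendsto (fun β : ℝ => β * -a) atTop atBot :=
      tendsto_id.atTop_mul_const_of_neg (neg_neg_of_pos (lt_of_le_of_ne ha (Ne.symm h)))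
    exact tendsto_exp_atBot.comp (this.congr fun β => by ring)

theorem existsUnique_pos_eq_of_strictAntiOn {f : ℝ → ℝ} {b y : ℝ} (hf : ContinuousOn f (Set.Ici 0))
    (hanti : StrictAntiOn f (Set.Ici 0)) (hlim : Tendsto f atTop (𝓝 b)) (hy : y ∈ Set.Ioo b (f 0)) :
    ∃! x, 0 < x ∧ f x = y := by
  obtain ⟨c, hc, hc0⟩ := ((hlim.eventually_lt_const hy.1).and (eventually_ge_atTop 0)).exists
  obtain ⟨x, hx, hfx⟩ :=
    intermediate_value_Icc' hc0 (hf.mono Set.Icc_subset_Ici_self) ⟨hc.le, hy.2.le⟩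
  have hx0 : 0 < x := lt_of_le_of_ne hx.1 fun h => hy.2.ne' (h ▸ hfx)
  exact ⟨x, ⟨hx0, hfx⟩, fun x' hx' =>
    hanti.injOn (Set.mem_Ici.2 hx'.1.le) (Set.mem_Ici.2 hx0.le) (hx'.2.trans hfx.symm)⟩

namespace Gibbs

variable {N : ℕ} {E : Fin N → ℝ}

noncomputable def meanEnergy (N : ℕ) (E : Fin N → ℝ) (β : ℝ) : ℝ :=
  ∑ i, gibbsWeight N E β i * E i

noncomputable def groundStates (N : ℕ) (E : Fin N → ℝ) : Finset (Fin N) :=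
  univ.filter fun i => ∀ j, E i ≤ E j

theorem card_groundStates : #(groundStates N E) = groundDeg N E := rfl

theorem mem_groundStates_iff {i₀ i : Fin N} (hi₀ : i₀ ∈ groundStates N E) :
    i ∈ groundStates N E ↔ E i = E i₀ := by
  simp only [groundStates, mem_filter, mem_univ, true_and] at hi₀ ⊢
  exact ⟨fun hi => le_antisymm (hi i₀) (hi₀ i), fun h j => h ▸ hi₀ j⟩

theorem groundStates_nonempty [NeZero N] : (groundStates N E).Nonempty := by
  obtain ⟨i₀, hi₀⟩ := Finite.exists_min E
  exact ⟨i₀, by simpa [groundStates] using hi₀⟩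

section

variable [NeZero N]

theorem gibbsZ_pos (β : ℝ) : 0 < gibbsZ N E β :=
  Finset.sum_pos (fun _ _ => exp_pos _) univ_nonempty

theorem gibbsWeight_pos (β : ℝ) (i : Fin N) : 0 < gibbsWeight N E β i :=
  div_pos (exp_pos _) (gibbsZ_pos β)

theorem sum_gibbsWeight (β : ℝ) : ∑ i, gibbsWeight N E β i = 1 := by
  simp only [gibbsWeight, ← Finset.sum_div]
  exact div_self (gibbsZ_pos β).ne'

theorem log_gibbsWeight (β : ℝ) (i : Fin N) :
    log (gibbsWeight N E β i) = -β * E i - log (gibbsZ N E β) := by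
  rw [gibbsWeight, log_div (exp_ne_zero _) (gibbsZ_pos β).ne', log_exp]

theorem neg_sum_gibbsWeight_mul_log_gibbsWeight (β γ : ℝ) :
    -∑ i, gibbsWeight N E β i * log (gibbsWeight N E γ i)
      = γ * meanEnergy N E β + log (gibbsZ N E γ) := by
  calc -∑ i, gibbsWeight N E β i * log (gibbsWeight N E γ i)
      = ∑ i, (γ * (gibbsWeight N E β i * E i) + log (gibbsZ N E γ) * gibbsWeight N E β i) := by
        rw [← Finset.sum_neg_distrib]
        exact Finset.sum_congr rfl fun i _ => by rw [log_gibbsWeight]; ring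
    _ = γ * meanEnergy N E β + log (gibbsZ N E γ) := by
        rw [Finset.sum_add_distrib, ← Finset.mul_sum, ← Finset.mul_sum, sum_gibbsWeight, mul_one,
          meanEnergy]

theorem gibbsEntropy_eq (β : ℝ) :
    gibbsEntropy N E β = β * meanEnergy N E β + log (gibbsZ N E β) :=
  neg_sum_gibbsWeight_mul_log_gibbsWeight β β

theorem gibbsWeight_injective (hE : ∃ i j, E i ≠ E j) : Function.Injective (gibbsWeight N E) := by
  intro β γ h
  obtain ⟨i, j, hij⟩ := hE
  have hlog : ∀ k, -β * E k - log (gibbsZ N E β) = -γ * E k - log (gibbsZ N E γ) := fun k => by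
    rw [← log_gibbsWeight, ← log_gibbsWeight, h]
  have : (β - γ) * (E i - E j) = 0 := by linear_combination hlog j - hlog i
  exact sub_eq_zero.mp ((mul_eq_zero.mp this).resolve_right (sub_ne_zero.mpr hij))

theorem gibbsEntropy_lt_mul_meanEnergy_add_log_gibbsZ (hE : ∃ i j, E i ≠ E j) {β γ : ℝ}
    (h : β ≠ γ) :
    gibbsEntropy N E β < γ * meanEnergy N E β + log (gibbsZ N E γ) := by
  rw [← neg_sum_gibbsWeight_mul_log_gibbsWeight, gibbsEntropy, neg_lt_neg_iff]
  exact sum_mul_log_lt_sum_mul_log (gibbsWeight_pos β) (gibbsWeight_pos γ)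
    (by rw [sum_gibbsWeight, sum_gibbsWeight]) ((gibbsWeight_injective hE).ne h)

theorem meanEnergy_strictAnti (hE : ∃ i j, E i ≠ E j) : StrictAnti (meanEnergy N E) := by
  intro β γ h
  have h₁ := gibbsEntropy_lt_mul_meanEnergy_add_log_gibbsZ hE h.ne
  have h₂ := gibbsEntropy_lt_mul_meanEnergy_add_log_gibbsZ hE h.ne'
  rw [gibbsEntropy_eq] at h₁ h₂
  nlinarith

theorem gibbsEntropy_strictAntiOn (hE : ∃ i j, E i ≠ E j) :
    StrictAntiOn (gibbsEntropy N E) (Set.Ici 0) := by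
  intro β hβ γ _ h
  calc gibbsEntropy N E γ < β * meanEnergy N E γ + log (gibbsZ N E β) :=
        gibbsEntropy_lt_mul_meanEnergy_add_log_gibbsZ hE h.ne'
    _ ≤ β * meanEnergy N E β + log (gibbsZ N E β) := by
      gcongr ?_ + _
      exact mul_le_mul_of_nonneg_left (meanEnergy_strictAnti hE h).le hβ
    _ = gibbsEntropy N E β := (gibbsEntropy_eq β).symm

theorem continuous_gibbsWeight (i : Fin N) : Continuous fun β => gibbsWeight N E β i :=
  Continuous.div (by fun_prop) (by unfold gibbsZ; fun_prop) fun β => (gibbsZ_pos β).ne'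

end

theorem gibbsEntropy_eq_sum_negMulLog (β : ℝ) :
    gibbsEntropy N E β = ∑ i, negMulLog (gibbsWeight N E β i) := by
  simp [gibbsEntropy, negMulLog, Finset.sum_neg_distrib]

theorem continuous_gibbsEntropy [NeZero N] : Continuous (gibbsEntropy N E) := by
  simp only [funext gibbsEntropy_eq_sum_negMulLog]
  exact continuous_finsetSum _ fun i _ => continuous_negMulLog.comp (continuous_gibbsWeight i)

theorem gibbsEntropy_zero : gibbsEntropy N E 0 = log N := by
  have hw : ∀ i, gibbsWeight N E 0 i = (N : ℝ)⁻¹ := fun i => by simp [gibbsWeight, gibbsZ]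
  simpa [gibbsEntropy_eq_sum_negMulLog, hw] using sum_negMulLog_uniformOn (univ : Finset (Fin N))

theorem gibbsWeight_eq_exp_sub (m β : ℝ) (i : Fin N) :
    gibbsWeight N E β i = exp (-β * (E i - m)) / ∑ j, exp (-β * (E j - m)) := by
  have hshift : ∀ k, exp (-β * (E k - m)) = exp (β * m) * exp (-β * E k) := fun k => by
    rw [← exp_add]; ring_nf
  simp only [hshift, ← Finset.mul_sum, mul_div_mul_left _ _ (exp_ne_zero _), gibbsWeight, gibbsZ]

theorem tendsto_gibbsWeight_atTop [NeZero N] (i : Fin N) :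
    Tendsto (fun β => gibbsWeight N E β i) atTop
      (𝓝 (if i ∈ groundStates N E then (#(groundStates N E) : ℝ)⁻¹ else 0)) := by
  obtain ⟨i₀, hi₀⟩ := groundStates_nonempty (E := E)
  have hexp : ∀ k, Tendsto (fun β => exp (-β * (E k - E i₀))) atTop
      (𝓝 (if k ∈ groundStates N E then 1 else 0)) := fun k => by
    have hk : 0 ≤ E k - E i₀ := by
      simp only [groundStates, mem_filter, mem_univ, true_and] at hi₀
      linarith [hi₀ k]
    simpa only [sub_eq_zero, ← mem_groundStates_iff hi₀] using tendsto_exp_neg_mul_atTop hk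
  have hZ : Tendsto (fun β => ∑ j, exp (-β * (E j - E i₀))) atTop (𝓝 #(groundStates N E)) := by
    simpa [Finset.sum_boole] using tendsto_finsetSum univ fun j _ => hexp j
  have hlim : (if i ∈ groundStates N E then (#(groundStates N E) : ℝ)⁻¹ else 0)
      = (if i ∈ groundStates N E then 1 else 0) / #(groundStates N E) := by
    split_ifs <;> simp
  simp only [gibbsWeight_eq_exp_sub (E i₀), hlim]
  exact (hexp i).div hZ (Nat.cast_ne_zero.mpr groundStates_nonempty.card_pos.ne')

theorem tendsto_gibbsEntropy_atTop [NeZero N] :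
    Tendsto (gibbsEntropy N E) atTop (𝓝 (log (groundDeg N E))) := by
  simp only [funext gibbsEntropy_eq_sum_negMulLog, ← card_groundStates,
    ← sum_negMulLog_uniformOn (groundStates N E)]
  exact tendsto_finsetSum _ fun i _ =>
    (continuous_negMulLog.tendsto _).comp (tendsto_gibbsWeight_atTop i)

end Gibbs

open Gibbs in
theorem stmt_13_general (N : ℕ) (E : Fin N → ℝ)
    (hE : ∃ i j, E i ≠ E j) :
    StrictAntiOn (gibbsEntropy N E) (Set.Ici 0) ∧
      gibbsEntropy N E 0 = Real.log N ∧
      Filter.Tendsto (gibbsEntropy N E) Filter.atTop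
        (nhds (Real.log (groundDeg N E))) ∧
      ∀ ℰ ∈ Set.Ioo (Real.log (groundDeg N E)) (Real.log N),
        ∃! β : ℝ, 0 < β ∧ gibbsEntropy N E β = ℰ := by
  have : NeZero N := NeZero.of_pos hE.choose.pos
  refine ⟨gibbsEntropy_strictAntiOn hE, gibbsEntropy_zero, tendsto_gibbsEntropy_atTop, ?_⟩
  intro ℰ hℰ
  rw [← gibbsEntropy_zero (E := E)] at hℰ
  exact existsUnique_pos_eq_of_strictAntiOn continuous_gibbsEntropy.continuousOn
    (gibbsEntropy_strictAntiOn hE) tendsto_gibbsEntropy_atTop hℰ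

/-- for a non-constant energy spectrum, the Gibbs entropy `S(β)` is
strictly decreasing on `[0, ∞)`, with `S(0) = ln N` and `S(β) → ln d_g` as `β → ∞`;
hence for each `ℰ ∈ (ln d_g, ln N)` there is a unique `β > 0` with `S(β) = ℰ`. -/
theorem stmt_13 (N : ℕ) (hN : 0 < N) (E : Fin N → ℝ)
    (hE : ∃ i j, E i ≠ E j) :
    StrictAntiOn (gibbsEntropy N E) (Set.Ici 0) ∧
      gibbsEntropy N E 0 = Real.log N ∧
      Filter.Tendsto (gibbsEntropy N E) Filter.atTop
        (nhds (Real.log (groundDeg N E))) ∧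
      ∀ ℰ ∈ Set.Ioo (Real.log (groundDeg N E)) (Real.log N),
        ∃! β : ℝ, 0 < β ∧ gibbsEntropy N E β = ℰ :=
  stmt_13_general N E hE
end

section
/- Minimum energy for fixed Schmidt coefficients: Let H_A, H_B be diagonal Hamiltonians with ordered eigenvalues A_0 ≤ ... ≤ A_{N_A-1} and B_0 ≤ ... ≤ B_{N_B-1} (N_A ≤ N_B), and fix squared Schmidt coefficients λ_0 ≥ λ_1 ≥ ... ≥ λ_{N_A-1} ≥ 0 summing to 1. For any two orthonormal families (a_i) in the A-space and (b_i) in the B-space, ∑_i λ_i (⟨a_i, H_A a_i⟩ + ⟨b_i, H_B b_i⟩) ≥ ∑_i λ_i (A_i + B_i). That is, the product eigenbasis pairing minimizes the energy among all states with the given Schmidt coefficients. -/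
open scoped InnerProductSpace
open Finset RCLike

/-!
In an eigenbasis, `re ⟪x, H x⟫ = ∑ j, E j * ‖⟪e j, x⟫‖ ^ 2`. The first `k + 1` vectors of an
orthonormal family therefore spread a total weight `k + 1` over the eigenvalues, each eigenvalue
receiving weight at most `1` by Bessel's inequality, so their energies add up to at least the
`k + 1` smallest eigenvalues (Ky Fan). Hence the energy excesses of the pairs `(a i, b i)` have
nonnegative partial sums, and Abel summation against the decreasing weights `l i ≥ 0` concludes.
-/

theorem sum_le_sum_mul_of_sum_eq_card {ι : Type*} [Fintype ι] (S : Finset ι) {E c : ι → ℝ} (t : ℝ)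
    (hS : ∀ j ∈ S, E j ≤ t) (hSc : ∀ j ∉ S, t ≤ E j) (hc0 : ∀ j, 0 ≤ c j) (hc1 : ∀ j, c j ≤ 1)
    (hc : ∑ j, c j = #S) :
    ∑ j ∈ S, E j ≤ ∑ j, E j * c j := by
  classical
  set d : ι → ℝ := fun j => if j ∈ S then 1 else 0
  have hd : ∑ j, d j = #S := by simp [d]
  have hEd : ∑ j, E j * d j = ∑ j ∈ S, E j := by simp [d, Finset.sum_ite_mem]
  have hnonneg : 0 ≤ ∑ j, (E j - t) * (c j - d j) := by
    refine Finset.sum_nonneg fun j _ => ?_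
    by_cases hj : j ∈ S
    · exact mul_nonneg_of_nonpos_of_nonpos (by linarith [hS j hj]) (by simp [d, hj, hc1 j])
    · exact mul_nonneg (by linarith [hSc j hj]) (by simp [d, hj, hc0 j])
  have hexpand : ∑ j, (E j - t) * (c j - d j)
      = ∑ j, E j * c j - ∑ j, E j * d j - t * (∑ j, c j - ∑ j, d j) := by
    simp only [mul_sub, sub_mul, Finset.sum_sub_distrib, Finset.mul_sum]
    ring
  rw [hexpand, hc, hd, hEd] at hnonneg
  linarith

theorem Fin.sum_mul_nonneg_of_antitone {n : ℕ} {l D : Fin n → ℝ} (hl : Antitone l)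
    (hl0 : ∀ i, 0 ≤ l i) (hD : ∀ k, 0 ≤ ∑ i ∈ Iic k, D i) :
    0 ≤ ∑ i, l i * D i := by
  induction n with
  | zero => simp
  | succ n ih =>
    have hsplit : ∑ i, l i * D i = ∑ i : Fin n, (l i.castSucc - l (Fin.last n)) * D i.castSucc
        + l (Fin.last n) * ∑ i ∈ Iic (Fin.last n), D i := by
      rw [show Iic (Fin.last n) = univ from Iic_top]
      simp only [Fin.sum_univ_castSucc, sub_mul, Finset.sum_sub_distrib, mul_add, Finset.mul_sum]
      ring
    rw [hsplit]
    refine add_nonneg (ih ?_ ?_ ?_) (mul_nonneg (hl0 _) (hD _))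
    · exact fun i j hij => sub_le_sub_right (hl (Fin.castSucc_le_castSucc_iff.mpr hij)) _
    · exact fun i => sub_nonneg.mpr (hl (Fin.le_last _))
    · exact fun k => (Fin.sum_Iic_castSucc D k).symm ▸ hD k.castSucc

section Eigenbasis

variable {𝕜 V : Type*} [RCLike 𝕜] [NormedAddCommGroup V] [InnerProductSpace 𝕜 V]
  {H : V →ₗ[𝕜] V}

theorem re_inner_map_self_eq_sum_of_eigenbasis {ι : Type*} [Fintype ι]
    {e : OrthonormalBasis ι 𝕜 V} {E : ι → ℝ} (heig : ∀ j, H (e j) = (E j : 𝕜) • e j) (x : V) :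
    re ⟪x, H x⟫_𝕜 = ∑ j, E j * ‖⟪e j, x⟫_𝕜‖ ^ 2 := by
  have hHx : H x = ∑ j, ⟪e j, x⟫_𝕜 • (E j : 𝕜) • e j := by
    conv_lhs => rw [← e.sum_repr' x]
    simp only [map_sum, map_smul, heig]
  rw [hHx, inner_sum, map_sum]
  refine Finset.sum_congr rfl fun j _ => ?_
  rw [inner_smul_right, inner_smul_right, ← inner_conj_symm x, mul_left_comm, RCLike.mul_conj]
  norm_cast

theorem sum_le_sum_re_inner_of_orthonormal {ι : Type*} [Fintype ι]
    {e : OrthonormalBasis ι 𝕜 V} {E : ι → ℝ} (heig : ∀ j, H (e j) = (E j : 𝕜) • e j)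
    {κ : Type*} {a : κ → V} (ha : Orthonormal 𝕜 a) (S : Finset ι) (T : Finset κ)
    (hST : #S = #T) (t : ℝ) (hS : ∀ j ∈ S, E j ≤ t) (hSc : ∀ j ∉ S, t ≤ E j) :
    ∑ j ∈ S, E j ≤ ∑ i ∈ T, re ⟪a i, H (a i)⟫_𝕜 := by
  set c : ι → ℝ := fun j => ∑ i ∈ T, ‖⟪e j, a i⟫_𝕜‖ ^ 2
  have hc1 : ∀ j, c j ≤ 1 := fun j => by
    simpa [c, norm_inner_symm] using ha.sum_inner_products_le (s := T) (e j)
  have hc : ∑ j, c j = #S := by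
    simp [c, Finset.sum_comm (s := Finset.univ), e.sum_sq_norm_inner_right, ha.1, hST]
  calc ∑ j ∈ S, E j ≤ ∑ j, E j * c j :=
        sum_le_sum_mul_of_sum_eq_card S t hS hSc (fun j => by positivity) hc1 hc
    _ = ∑ i ∈ T, re ⟪a i, H (a i)⟫_𝕜 := by
        simp only [c, re_inner_map_self_eq_sum_of_eigenbasis heig, Finset.mul_sum]
        exact Finset.sum_comm

theorem sum_Iic_castLE_le_sum_re_inner {M K : ℕ} (h : K ≤ M) {e : OrthonormalBasis (Fin M) 𝕜 V}
    {E : Fin M → ℝ} (hE : Monotone E) (heig : ∀ j, H (e j) = (E j : 𝕜) • e j)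
    {a : Fin K → V} (ha : Orthonormal 𝕜 a) (k : Fin K) :
    ∑ i ∈ Iic k, E (i.castLE h) ≤ ∑ i ∈ Iic k, re ⟪a i, H (a i)⟫_𝕜 := by
  rw [← Fin.sum_Iic_castLE]
  refine sum_le_sum_re_inner_of_orthonormal heig ha _ _ (by simp) (E (k.castLE h))
    (fun j hj => hE (mem_Iic.mp hj)) (fun j hj => hE (not_le.mp (mem_Iic.not.mp hj)).le)

end Eigenbasis

theorem stmt_19_general {VA VB : Type*} [NormedAddCommGroup VA] [InnerProductSpace ℂ VA]
    [NormedAddCommGroup VB] [InnerProductSpace ℂ VB]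
    (NA NB : ℕ) (hN : NA ≤ NB)
    (eA : OrthonormalBasis (Fin NA) ℂ VA) (eB : OrthonormalBasis (Fin NB) ℂ VB)
    (HA : VA →ₗ[ℂ] VA) (HB : VB →ₗ[ℂ] VB) (A : Fin NA → ℝ) (B : Fin NB → ℝ)
    (hA : Monotone A) (hB : Monotone B)
    (heigA : ∀ i, HA (eA i) = (A i : ℂ) • eA i)
    (heigB : ∀ j, HB (eB j) = (B j : ℂ) • eB j)
    (l : Fin NA → ℝ) (hl : Antitone l) (hl0 : ∀ i, 0 ≤ l i)
    (a : Fin NA → VA) (ha : Orthonormal ℂ a)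
    (b : Fin NA → VB) (hb : Orthonormal ℂ b) :
    ∑ i, l i * (A i + B (Fin.castLE hN i))
      ≤ ∑ i, l i * ((⟪a i, HA (a i)⟫_ℂ).re + (⟪b i, HB (b i)⟫_ℂ).re) := by
  have hpartial : ∀ k, 0 ≤ ∑ i ∈ Iic k,
      (((⟪a i, HA (a i)⟫_ℂ).re + (⟪b i, HB (b i)⟫_ℂ).re) - (A i + B (Fin.castLE hN i))) := by
    intro k
    rw [Finset.sum_sub_distrib, sub_nonneg, Finset.sum_add_distrib, Finset.sum_add_distrib]
    exact add_le_add (by simpa using sum_Iic_castLE_le_sum_re_inner le_rfl hA heigA ha k)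
      (sum_Iic_castLE_le_sum_re_inner hN hB heigB hb k)
  simpa only [mul_sub, Finset.sum_sub_distrib, sub_nonneg] using
    Fin.sum_mul_nonneg_of_antitone hl hl0 hpartial

/-- minimum energy for fixed Schmidt coefficients. With local
Hamiltonians `H_A`, `H_B` having orthonormal eigenbases and increasingly ordered
eigenvalues `A`, `B`, and decreasing nonnegative Schmidt weights `l` summing to 1,
any pair of orthonormal families `a`, `b` satisfies
`∑ i, l i (⟨a i, H_A a i⟩ + ⟨b i, H_B b i⟩) ≥ ∑ i, l i (A i + B i)`. -/
theorem stmt_19 {VA VB : Type*} [NormedAddCommGroup VA] [InnerProductSpace ℂ VA]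
    [NormedAddCommGroup VB] [InnerProductSpace ℂ VB]
    (NA NB : ℕ) (hN : NA ≤ NB)
    (eA : OrthonormalBasis (Fin NA) ℂ VA) (eB : OrthonormalBasis (Fin NB) ℂ VB)
    (HA : VA →ₗ[ℂ] VA) (HB : VB →ₗ[ℂ] VB) (A : Fin NA → ℝ) (B : Fin NB → ℝ)
    (hA : Monotone A) (hB : Monotone B)
    (heigA : ∀ i, HA (eA i) = (A i : ℂ) • eA i)
    (heigB : ∀ j, HB (eB j) = (B j : ℂ) • eB j)
    (l : Fin NA → ℝ) (hl : Antitone l) (hl0 : ∀ i, 0 ≤ l i) (hlsum : ∑ i, l i = 1)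
    (a : Fin NA → VA) (ha : Orthonormal ℂ a)
    (b : Fin NA → VB) (hb : Orthonormal ℂ b) :
    ∑ i, l i * (A i + B (Fin.castLE hN i))
      ≤ ∑ i, l i * ((⟪a i, HA (a i)⟫_ℂ).re + (⟪b i, HB (b i)⟫_ℂ).re) :=
  stmt_19_general NA NB hN eA eB HA HB A B hA hB heigA heigB l hl hl0 a ha b hb
end
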